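/- For every θ ∈ (0,π) with t = cos θ, the partial sums ∑_{l=0, l≠2}^{N} (l+1)/(8 - l(l+2)) · sin((l+1)θ)/sin θ converge as N → ∞ to (π − θ)·t(3 − 4t²)/(2√(1 − t²)) − (1 − 4t²)/12. -/

import Mathlib

/-!
Put `z = exp (θ * I)`, so that the sum is the imaginary part of `∑ greenCoeff l * z ^ (l + 1)`,
divided by `sin θ`. Partial fractions give `greenCoeff (3 + k) = -(1/(k+1) + 1/(k+7))/2`, so up to
finitely many terms the series is `-(z³ ∑ z^k/k + z⁻³ ∑ z^k/k)/2` with shifted indices. On the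
closed unit disc minus `1`, `∑ z^k/k` converges by Dirichlet's test, and by Abel's limit theorem
its sum is `-log (1 - z)`. On the circle `z³ + z⁻³ = 2 cos 3θ` is real, so only
`Im log (1 - e^{iθ}) = (θ - π)/2` enters the limit.
-/

open Filter Finset Complex Topology

theorem Filter.Tendsto.sum_range_const_add {E : Type*} [AddCommGroup E] [TopologicalSpace E]
    [IsTopologicalAddGroup E] {f : ℕ → E} {L : E}
    (h : Tendsto (fun n ↦ ∑ k ∈ range n, f k) atTop (𝓝 L)) (j : ℕ) :
    Tendsto (fun n ↦ ∑ k ∈ range n, f (j + k)) atTop (𝓝 (L - ∑ k ∈ range j, f k)) := by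
  simp_rw [← sum_range_add_sub_sum_range f j, add_comm j]
  exact (h.comp (tendsto_add_atTop_nat j)).sub_const _

namespace Complex

theorem norm_sum_range_pow_succ_le {z : ℂ} (hz : ‖z‖ ≤ 1) (hz1 : z ≠ 1) (n : ℕ) :
    ‖∑ i ∈ range n, z ^ (i + 1)‖ ≤ 2 / ‖z - 1‖ := by
  have hsum : ∑ i ∈ range n, z ^ (i + 1) = z * ((z ^ n - 1) / (z - 1)) := by
    simp_rw [← geom_sum_eq hz1, mul_sum, pow_succ']
  have hnum : ‖z ^ n - 1‖ ≤ 2 := calc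
    ‖z ^ n - 1‖ ≤ ‖z‖ ^ n + 1 := by simpa [norm_pow] using norm_sub_le (z ^ n) 1
    _ ≤ 2 := by linarith [pow_le_one₀ (norm_nonneg z) hz (n := n)]
  rw [hsum, norm_mul, norm_div]
  calc ‖z‖ * (‖z ^ n - 1‖ / ‖z - 1‖) ≤ 1 * (2 / ‖z - 1‖) := by gcongr
    _ = 2 / ‖z - 1‖ := one_mul _

theorem cauchySeq_sum_range_pow_div {z : ℂ} (hz : ‖z‖ ≤ 1) (hz1 : z ≠ 1) :
    CauchySeq fun n ↦ ∑ k ∈ range n, z ^ k / k := by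
  have hanti : Antitone fun i : ℕ ↦ ((i : ℝ) + 1)⁻¹ := fun a b hab ↦
    inv_anti₀ (by positivity) (by gcongr)
  have hzero : Tendsto (fun i : ℕ ↦ ((i : ℝ) + 1)⁻¹) atTop (𝓝 0) := by
    simpa [one_div] using tendsto_one_div_add_atTop_nhds_zero_nat (𝕜 := ℝ)
  have hDirichlet := hanti.cauchySeq_series_mul_of_tendsto_zero_of_bounded hzero
    (norm_sum_range_pow_succ_le hz hz1)
  refine (cauchySeq_shift 1).mp ?_
  convert hDirichlet using 2 with n
  rw [sum_range_succ']
  simp [div_eq_inv_mul, Complex.real_smul]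

theorem one_sub_mem_slitPlane {z : ℂ} (hz : ‖z‖ ≤ 1) (hz1 : z ≠ 1) : 1 - z ∈ slitPlane := by
  rw [mem_slitPlane_iff]
  by_contra! h
  simp only [sub_re, one_re, sub_im, one_im, zero_sub, neg_eq_zero] at h
  have hre : z.re = 1 := by linarith [re_le_norm z, h.1]
  exact hz1 (Complex.ext (by simpa using hre) (by simpa using h.2))

theorem tendsto_sum_range_pow_div {z : ℂ} (hz : ‖z‖ ≤ 1) (hz1 : z ≠ 1) :
    Tendsto (fun n ↦ ∑ k ∈ range n, z ^ k / k) atTop (𝓝 (-log (1 - z))) := by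
  obtain ⟨L, hL⟩ := cauchySeq_tendsto_of_complete (cauchySeq_sum_range_pow_div hz hz1)
  suffices L = -log (1 - z) from this ▸ hL
  have hAbel := tendsto_map'_iff.mp (tendsto_tsum_powerSeries_nhdsWithin_lt hL)
  rw [Function.comp_def] at hAbel
  have hseries : ∀ᶠ x : ℝ in 𝓝[<] 1,
      ∑' n : ℕ, z ^ n / n * (x : ℂ) ^ n = -log (1 - x * z) := by
    filter_upwards [Ioo_mem_nhdsLT (zero_lt_one' ℝ)] with x hx
    have hxz : ‖(x : ℂ) * z‖ < 1 := by
      rw [norm_mul, norm_real, Real.norm_of_nonneg hx.1.le]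
      nlinarith [hx.1, hx.2, norm_nonneg z]
    rw [← (hasSum_taylorSeries_neg_log hxz).tsum_eq]
    exact tsum_congr fun n ↦ by ring
  have hlog : ContinuousAt (fun x : ℝ ↦ -log (1 - x * z)) 1 :=
    (ContinuousAt.clog (by fun_prop) (by simpa using one_sub_mem_slitPlane hz hz1)).neg
  exact tendsto_nhds_unique (hAbel.congr' hseries)
    (by simpa using hlog.tendsto.mono_left nhdsWithin_le_nhds)

theorem exp_mul_I_pow (θ : ℝ) (k : ℕ) : exp (θ * I) ^ k = exp ((k * θ : ℝ) * I) := by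
  rw [← exp_nat_mul]
  push_cast
  ring_nf

theorem exp_mul_I_pow_add_inv_pow (θ : ℝ) (k : ℕ) :
    exp (θ * I) ^ k + (exp (θ * I))⁻¹ ^ k = (2 * Real.cos (k * θ) : ℝ) := by
  rw [inv_pow, exp_mul_I_pow, ← exp_neg]
  push_cast
  rw [two_cos]
  ring_nf

theorem one_sub_exp_mul_I (θ : ℝ) :
    1 - exp (θ * I) = (2 * Real.sin (θ / 2) : ℝ) * exp (((θ - Real.pi) / 2 : ℝ) * I) := by
  have hu : exp (θ / 2 * I) ≠ 0 := exp_ne_zero _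
  have hsq : exp (θ * I) = exp (θ / 2 * I) ^ 2 := by rw [← exp_nat_mul]; ring_nf
  have hinv : exp (-(θ / 2) * I) = (exp (θ / 2 * I))⁻¹ := by rw [← exp_neg]; ring_nf
  have hshift : exp (((θ - Real.pi) / 2 : ℝ) * I) = -I * exp (θ / 2 * I) := by
    rw [show (((θ - Real.pi) / 2 : ℝ) : ℂ) * I = θ / 2 * I - Real.pi / 2 * I by push_cast; ring,
      exp_sub, exp_pi_div_two_mul_I, div_I]
    ring
  rw [hshift, ofReal_mul, ofReal_sin, ofReal_ofNat, ofReal_div, ofReal_ofNat, two_sin, hsq, hinv]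
  generalize exp (θ / 2 * I) = u at hu ⊢
  field_simp
  linear_combination (1 - u ^ 2) * I_sq

theorem im_log_one_sub_exp_mul_I {θ : ℝ} (hθ : θ ∈ Set.Ioo 0 (2 * Real.pi)) :
    (log (1 - exp (θ * I))).im = (θ - Real.pi) / 2 := by
  have hsin : 0 < Real.sin (θ / 2) :=
    Real.sin_pos_of_pos_of_lt_pi (by linarith [hθ.1]) (by linarith [hθ.2])
  rw [log_im, one_sub_exp_mul_I, arg_real_mul _ (by positivity), exp_mul_I,
    arg_cos_add_sin_mul_I ⟨by linarith [hθ.1, Real.pi_pos], by linarith [hθ.2, Real.pi_pos]⟩]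

end Complex

noncomputable def greenCoeff (l : ℕ) : ℝ :=
  if l = 2 then 0 else (l + 1) / (8 - l * (l + 2))

theorem greenCoeff_three_add (k : ℕ) :
    (greenCoeff (3 + k) : ℂ) = -(1 / (1 + k) + 1 / (7 + k)) / 2 := by
  have h : (8 : ℝ) - (3 + k : ℕ) * ((3 + k : ℕ) + 2) = -((1 + k) * (7 + k)) := by
    push_cast
    ring
  have h1 : (1 + k : ℂ) ≠ 0 := by norm_cast; omega
  have h7 : (7 + k : ℂ) ≠ 0 := by norm_cast; omega
  rw [greenCoeff, if_neg (by omega), h]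
  push_cast
  field_simp
  ring

theorem tendsto_sum_greenCoeff_mul_pow {z : ℂ} (hz : ‖z‖ ≤ 1) (hz0 : z ≠ 0) (hz1 : z ≠ 1) :
    Tendsto (fun n ↦ ∑ l ∈ range n, (greenCoeff l : ℂ) * z ^ (l + 1)) atTop
      (𝓝 ((z + z⁻¹) / 4 + (z ^ 2 + z⁻¹ ^ 2) / 2 + 1 / 6 + z ^ 3 / 12
        + (z ^ 3 + z⁻¹ ^ 3) / 2 * log (1 - z))) := by
  have hw := tendsto_sum_range_pow_div hz hz1
  set w : ℕ → ℂ := fun k ↦ z ^ k / k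
  have hterm : ∀ k, (greenCoeff (3 + k) : ℂ) * z ^ (3 + k + 1)
      = -(z ^ 3 * w (1 + k) + z⁻¹ ^ 3 * w (7 + k)) / 2 := fun k ↦ by
    rw [greenCoeff_three_add]
    simp only [w]
    push_cast
    field_simp
    ring
  have hsplit : ∀ n, ∑ l ∈ range (n + 3), (greenCoeff l : ℂ) * z ^ (l + 1) =
      ∑ l ∈ range 3, (greenCoeff l : ℂ) * z ^ (l + 1) -
        (z ^ 3 * ∑ k ∈ range n, w (1 + k) + z⁻¹ ^ 3 * ∑ k ∈ range n, w (7 + k)) / 2 := fun n ↦ by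
    rw [add_comm n 3, sum_range_add, sum_congr rfl fun k _ ↦ hterm k, ← sum_div,
      sum_neg_distrib, sum_add_distrib, ← mul_sum, ← mul_sum]
    ring
  rw [← tendsto_add_atTop_iff_nat 3]
  refine Tendsto.congr (fun n ↦ (hsplit n).symm) ?_
  convert ((((hw.sum_range_const_add 1).const_mul (z ^ 3)).add
    ((hw.sum_range_const_add 7).const_mul (z⁻¹ ^ 3))).div_const 2).const_sub _ using 2
  simp only [sum_range_succ, sum_range_zero, greenCoeff]
  norm_num
  field_simp
  ring

theorem tendsto_sum_greenCoeff_mul_sin {θ : ℝ} (hθ : θ ∈ Set.Ioo 0 (2 * Real.pi)) :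
    Tendsto (fun n ↦ ∑ l ∈ range n, greenCoeff l * Real.sin ((l + 1) * θ)) atTop
      (𝓝 (Real.sin (3 * θ) / 12 + Real.cos (3 * θ) * (θ - Real.pi) / 2)) := by
  have hsin : 0 < Real.sin (θ / 2) :=
    Real.sin_pos_of_pos_of_lt_pi (by linarith [hθ.1]) (by linarith [hθ.2])
  have hz1 : exp (θ * I) ≠ 1 := fun h ↦ by
    have h0 := one_sub_exp_mul_I θ
    rw [h, sub_self, eq_comm, mul_eq_zero, ofReal_eq_zero] at h0
    exact h0.elim (by positivity) (exp_ne_zero _)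
  have hlim := (continuous_im.tendsto _).comp
    (tendsto_sum_greenCoeff_mul_pow (norm_exp_ofReal_mul_I θ).le (exp_ne_zero _) hz1)
  have hcos := exp_mul_I_pow_add_inv_pow θ
  have hcos1 := hcos 1
  rw [pow_one, pow_one] at hcos1
  convert hlim using 2
  · simp only [Function.comp_apply, im_sum, im_ofReal_mul, exp_mul_I_pow, exp_ofReal_mul_I_im,
      Nat.cast_add, Nat.cast_one]
  · rw [hcos1, hcos 2, hcos 3]
    simp only [add_im, div_ofNat_im, div_ofNat_re, ofReal_im, mul_im, ofReal_re, exp_mul_I_pow,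
      exp_ofReal_mul_I_im, im_log_one_sub_exp_mul_I hθ, one_im]
    push_cast
    ring

open Filter in
/-- For `θ ∈ (0,π)`, `t = cos θ`, the partial sums
`∑_{l=0, l≠2}^N (l+1)/(8 - l(l+2)) sin((l+1)θ)/sin θ` converge, as `N → ∞`, to
`(π - θ)·t(3 - 4t²)/(2√(1 - t²)) - (1 - 4t²)/12`. -/
theorem stmt_14 (θ : ℝ) (hθ : θ ∈ Set.Ioo 0 Real.pi) (t : ℝ) (ht : t = Real.cos θ) :
    Tendsto (fun N : ℕ => ∑ l ∈ Finset.range (N + 1),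
        if l = 2 then 0 else
          ((l : ℝ) + 1) / (8 - (l : ℝ) * ((l : ℝ) + 2)) *
            (Real.sin (((l : ℝ) + 1) * θ) / Real.sin θ))
      atTop
      (nhds ((Real.pi - θ) * (t * (3 - 4 * t ^ 2)) / (2 * Real.sqrt (1 - t ^ 2))
        - (1 - 4 * t ^ 2) / 12)) := by
  obtain ⟨hθ0, hθπ⟩ := hθ
  have hsin : 0 < Real.sin θ := Real.sin_pos_of_pos_of_lt_pi hθ0 hθπ
  have hsqrt : √(1 - t ^ 2) = Real.sin θ := by
    rw [ht, ← Real.sin_sq, Real.sqrt_sq hsin.le]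
  have hlim := ((tendsto_sum_greenCoeff_mul_sin ⟨hθ0, by linarith⟩).div_const
    (Real.sin θ)).comp (tendsto_add_atTop_nat 1)
  convert hlim using 2 with N
  · rw [Function.comp_apply, sum_div]
    refine sum_congr rfl fun l _ ↦ ?_
    unfold greenCoeff
    split_ifs <;> ring
  · rw [hsqrt, ht, Real.sin_three_mul, Real.cos_three_mul]
    field_simp
    linear_combination 8 * Real.sin θ * Real.sin_sq_add_cos_sq θ
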